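/- If η ∈ ℂ^V satisfies μ_p · ‖η‖_{ℓ^p} < 1, then the forward Born series Σ_{j=1}^∞ K_j(η, …, η) converges absolutely in ℂ^{R×S}. -/

import Mathlib

open scoped ENNReal

/-- The ℓ^p norm of a finitely indexed family, `p ∈ [1, ∞]`. -/
noncomputable def lpNorm (p : ℝ≥0∞) {ι E : Type*} [Fintype ι] [SeminormedAddCommGroup E]
    (f : ι → E) : ℝ :=
  if p = ∞ then ⨆ i, ‖f i‖ else (∑ i, ‖f i‖ ^ p.toReal) ^ (1 / p.toReal)

variable {V R S : Type*} [Fintype V] [DecidableEq V] [Fintype R] [Fintype S]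

/-- The multilinear forward Born operator: `bornK α0 B G C j` is `K_j`, mapping
`(η_1, …, η_j)` (given as the first `j` values of an `ℕ`-indexed family) to
`(r, s) ↦ (−α0)^j (B D_{η_1} G D_{η_2} G ⋯ G D_{η_j} C)(r, s)`; `K_0 := 0` is junk. -/
noncomputable def bornK (α0 : ℝ) (B : Matrix R V ℂ) (G : Matrix V V ℂ) (C : Matrix V S ℂ) :
    ℕ → (ℕ → V → ℂ) → R × S → ℂ
  | 0, _ => 0
  | j + 1, η => fun rs =>
      (-(α0 : ℂ)) ^ (j + 1) *
        (B * Matrix.diagonal (η 0) *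
          (List.ofFn fun i : Fin j => G * Matrix.diagonal (η (i.1 + 1))).prod * C) rs.1 rs.2

/-- `μ_p = α0 · max_{v ∈ V} ‖row v of G‖_{ℓ^q}` (this depends only on `q`). -/
noncomputable def muConst (α0 : ℝ) (q : ℝ≥0∞) (G : Matrix V V ℂ) : ℝ :=
  α0 * ⨆ v : V, lpNorm q (G v)

/-- `ν_p = α0 · (Σ_{r ∈ R} ‖row r of B‖_q^p)^{1/p} · (Σ_{s ∈ S} ‖column s of C‖_q^p)^{1/p}`,
with maxima replacing sums when `p = ∞`. -/
noncomputable def nuConst (α0 : ℝ) (p q : ℝ≥0∞) (B : Matrix R V ℂ) (C : Matrix V S ℂ) : ℝ :=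
  α0 * lpNorm p (fun r : R => lpNorm q (B r)) * lpNorm p (fun s : S => lpNorm q fun v => C v s)

/-- `C_p = min_{‖η‖_p = 1} ‖K_1 η‖_p`. -/
noncomputable def CpConst (p : ℝ≥0∞) (α0 : ℝ) (B : Matrix R V ℂ) (G : Matrix V V ℂ)
    (C : Matrix V S ℂ) : ℝ :=
  sInf {t : ℝ | ∃ η : V → ℂ, lpNorm p η = 1 ∧ t = lpNorm p (bornK α0 B G C 1 fun _ => η)}

/-!
Writing `K_{j+1}(η, …, η) = (-α0)^{j+1} B D_η (G D_η)^j C`, Hölder's inequality applied row by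
row gives, for the entrywise sup norm, `‖A D_η X‖ ≤ (max_i ‖row i of A‖_q) ‖η‖_p ‖X‖`.
Iterating, the `(j+1)`-st term of the Born series is entrywise `O(ρ^j)` with `ρ = μ_p ‖η‖_p < 1`,
so the series of `ℓ^p` norms is dominated by a geometric series.
-/

open Matrix

attribute [local instance] Matrix.seminormedAddCommGroup

section LpNorm

variable {ι : Type*} [Fintype ι] {E F : Type*} [SeminormedAddCommGroup E]
  [SeminormedAddCommGroup F]

lemma lpNorm_nonneg (p : ℝ≥0∞) (f : ι → E) : 0 ≤ lpNorm p f := by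
  unfold lpNorm
  split
  · exact Real.iSup_nonneg fun i => norm_nonneg _
  · positivity

lemma iSup_lpNorm_nonneg {κ : Type*} (p : ℝ≥0∞) (f : κ → ι → E) : 0 ≤ ⨆ k, lpNorm p (f k) :=
  Real.iSup_nonneg fun k => lpNorm_nonneg p (f k)

lemma lpNorm_le_mul_of_norm_le {p : ℝ≥0∞} (hp : p ≠ 0) {f : ι → E} {g : ι → F} {c : ℝ}
    (hc : 0 ≤ c) (h : ∀ i, ‖f i‖ ≤ c * ‖g i‖) : lpNorm p f ≤ c * lpNorm p g := by
  unfold lpNorm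
  split_ifs with hp_top
  · refine Real.iSup_le (fun i => (h i).trans ?_) (mul_nonneg hc (lpNorm_nonneg ∞ g))
    exact mul_le_mul_of_nonneg_left
      (le_ciSup (f := fun i => ‖g i‖) (Finite.bddAbove_range _) i) hc
  · have hp_pos : 0 < p.toReal := ENNReal.toReal_pos hp hp_top
    calc (∑ i, ‖f i‖ ^ p.toReal) ^ (1 / p.toReal)
        ≤ (∑ i, (c * ‖g i‖) ^ p.toReal) ^ (1 / p.toReal) := by gcongr with i; exact h i
      _ = c * (∑ i, ‖g i‖ ^ p.toReal) ^ (1 / p.toReal) := by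
        simp_rw [Real.mul_rpow hc (norm_nonneg _), ← Finset.mul_sum]
        rw [Real.mul_rpow (by positivity) (by positivity), one_div,
          Real.rpow_rpow_inv hc hp_pos.ne']

lemma sum_norm_mul_le_lpNorm_top_mul_lpNorm_one (f : ι → E) (g : ι → F) :
    ∑ i, ‖f i‖ * ‖g i‖ ≤ lpNorm ∞ f * lpNorm 1 g := by
  simp only [lpNorm, if_neg ENNReal.one_ne_top, ENNReal.toReal_one, Real.rpow_one,
    div_one, Finset.mul_sum]
  gcongr with i
  exact le_ciSup (Finite.bddAbove_range fun i => ‖f i‖) i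

lemma sum_norm_mul_le_lpNorm_mul_lpNorm (p q : ℝ≥0∞) [p.HolderConjugate q] (f : ι → E)
    (g : ι → F) : ∑ i, ‖f i‖ * ‖g i‖ ≤ lpNorm p f * lpNorm q g := by
  by_cases hp : p = ∞
  · obtain rfl : q = 1 := (ENNReal.HolderConjugate.eq_top_iff_eq_one p q).1 hp
    subst hp
    exact sum_norm_mul_le_lpNorm_top_mul_lpNorm_one f g
  by_cases hq : q = ∞
  · obtain rfl : p = 1 := (ENNReal.HolderConjugate.eq_top_iff_eq_one q p).1 hq
    subst hq
    simpa only [mul_comm] using sum_norm_mul_le_lpNorm_top_mul_lpNorm_one g f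
  simp only [lpNorm, if_neg hp, if_neg hq]
  exact Real.inner_le_Lp_mul_Lq_of_nonneg _ (ENNReal.HolderConjugate.toReal_of_ne_top hp hq)
    (fun _ _ => norm_nonneg _) (fun _ _ => norm_nonneg _)

lemma norm_sum_mul_le_lpNorm_mul_lpNorm {𝕜 : Type*} [SeminormedRing 𝕜] (p q : ℝ≥0∞)
    [p.HolderConjugate q] (f g : ι → 𝕜) : ‖∑ i, f i * g i‖ ≤ lpNorm p f * lpNorm q g :=
  calc ‖∑ i, f i * g i‖ ≤ ∑ i, ‖f i‖ * ‖g i‖ :=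
        (norm_sum_le _ _).trans (Finset.sum_le_sum fun _ _ => norm_mul_le _ _)
    _ ≤ lpNorm p f * lpNorm q g := sum_norm_mul_le_lpNorm_mul_lpNorm p q f g

end LpNorm

section MatrixBounds

variable {𝕜 : Type*} [SeminormedRing 𝕜] {l m n : Type*} [Fintype l] [Fintype m] [DecidableEq m]
  [Fintype n] (p q : ℝ≥0∞) [p.HolderConjugate q]

lemma norm_mul_diagonal_mul_le (A : Matrix l m 𝕜) (η : m → 𝕜) (X : Matrix m n 𝕜) :
    ‖A * diagonal η * X‖ ≤ (⨆ i, lpNorm q (A i)) * lpNorm p η * ‖X‖ := by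
  have hA := iSup_lpNorm_nonneg q A
  refine (norm_le_iff (by positivity [lpNorm_nonneg p η])).2 fun i k => ?_
  have hrow : lpNorm q (A i) ≤ ⨆ i, lpNorm q (A i) :=
    le_ciSup (f := fun i => lpNorm q (A i)) (Finite.bddAbove_range _) i
  have hcol : lpNorm p (fun w => η w * X w k) ≤ ‖X‖ * lpNorm p η :=
    lpNorm_le_mul_of_norm_le (ENNReal.HolderConjugate.ne_zero p q) (norm_nonneg X) fun w =>
      (norm_mul_le _ _).trans <| by
        rw [mul_comm]
        gcongr
        exact norm_entry_le_entrywise_sup_norm X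
  calc ‖(A * diagonal η * X) i k‖ = ‖∑ w, A i w * (η w * X w k)‖ := by
        rw [Matrix.mul_apply]
        simp only [Matrix.mul_diagonal, mul_assoc]
    _ ≤ lpNorm q (A i) * lpNorm p (fun w => η w * X w k) :=
        norm_sum_mul_le_lpNorm_mul_lpNorm q p _ _
    _ ≤ (⨆ i, lpNorm q (A i)) * (‖X‖ * lpNorm p η) :=
        mul_le_mul hrow hcol (lpNorm_nonneg _ _) hA
    _ = (⨆ i, lpNorm q (A i)) * lpNorm p η * ‖X‖ := by ring

lemma norm_pow_mul_diagonal_mul_le (G : Matrix m m 𝕜) (η : m → 𝕜) (C : Matrix m n 𝕜) (j : ℕ) :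
    ‖(G * diagonal η) ^ j * C‖ ≤ ((⨆ i, lpNorm q (G i)) * lpNorm p η) ^ j * ‖C‖ := by
  induction j with
  | zero => simp
  | succ j ih =>
    have hρ : 0 ≤ (⨆ i, lpNorm q (G i)) * lpNorm p η :=
      mul_nonneg (iSup_lpNorm_nonneg q G) (lpNorm_nonneg p η)
    calc ‖(G * diagonal η) ^ (j + 1) * C‖ = ‖G * diagonal η * ((G * diagonal η) ^ j * C)‖ := by
          rw [pow_succ', Matrix.mul_assoc]
      _ ≤ (⨆ i, lpNorm q (G i)) * lpNorm p η * ‖(G * diagonal η) ^ j * C‖ :=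
          norm_mul_diagonal_mul_le p q _ _ _
      _ ≤ (⨆ i, lpNorm q (G i)) * lpNorm p η *
            (((⨆ i, lpNorm q (G i)) * lpNorm p η) ^ j * ‖C‖) := by
          gcongr
      _ = ((⨆ i, lpNorm q (G i)) * lpNorm p η) ^ (j + 1) * ‖C‖ := by ring

end MatrixBounds

section Born

variable {α0 : ℝ} (B : Matrix R V ℂ) (G : Matrix V V ℂ) (C : Matrix V S ℂ) (η : V → ℂ)

omit [Fintype R] [Fintype S] in
lemma bornK_succ_const (j : ℕ) :
    bornK α0 B G C (j + 1) (fun _ => η) =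
      fun rs =>
        (-(α0 : ℂ)) ^ (j + 1) * (B * diagonal η * ((G * diagonal η) ^ j * C)) rs.1 rs.2 := by
  funext rs
  simp [bornK, List.ofFn_const, List.prod_replicate, Matrix.mul_assoc]

lemma norm_bornK_succ_const_apply_le (hα0 : 0 ≤ α0) (p q : ℝ≥0∞) [p.HolderConjugate q]
    (j : ℕ) (rs : R × S) :
    ‖bornK α0 B G C (j + 1) (fun _ => η) rs‖ ≤
      α0 * (⨆ r, lpNorm q (B r)) * lpNorm p η * ‖C‖ * (muConst α0 q G * lpNorm p η) ^ j := by
  have hB := iSup_lpNorm_nonneg q B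
  have hη := lpNorm_nonneg p η
  rw [bornK_succ_const]
  calc ‖(-(α0 : ℂ)) ^ (j + 1) * (B * diagonal η * ((G * diagonal η) ^ j * C)) rs.1 rs.2‖
      ≤ α0 ^ (j + 1) * ‖B * diagonal η * ((G * diagonal η) ^ j * C)‖ := by
        rw [norm_mul, norm_pow, norm_neg, Complex.norm_real, Real.norm_of_nonneg hα0]
        gcongr
        exact norm_entry_le_entrywise_sup_norm _
    _ ≤ α0 ^ (j + 1) * ((⨆ r, lpNorm q (B r)) * lpNorm p η *
          (((⨆ v, lpNorm q (G v)) * lpNorm p η) ^ j * ‖C‖)) := by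
        gcongr
        refine (norm_mul_diagonal_mul_le p q _ _ _).trans ?_
        gcongr
        exact norm_pow_mul_diagonal_mul_le p q G η C j
    _ = α0 * (⨆ r, lpNorm q (B r)) * lpNorm p η * ‖C‖ * (muConst α0 q G * lpNorm p η) ^ j := by
        unfold muConst
        ring

end Born

theorem forward_born_series_converges_general
    (p q : ℝ≥0∞) (hpq : 1 / p + 1 / q = 1)
    (α0 : ℝ) (hα0 : 0 < α0) (B : Matrix R V ℂ) (G : Matrix V V ℂ) (C : Matrix V S ℂ)
    (η : V → ℂ) (hη : muConst α0 q G * lpNorm p η < 1) :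
    Summable (fun j : ℕ => lpNorm p (bornK α0 B G C (j + 1) fun _ => η)) := by
  have : p.HolderConjugate q := ENNReal.holderConjugate_iff.2 (by simpa only [one_div] using hpq)
  set ρ := muConst α0 q G * lpNorm p η
  set A := α0 * (⨆ r, lpNorm q (B r)) * lpNorm p η * ‖C‖
  have hρ : 0 ≤ ρ :=
    mul_nonneg (mul_nonneg hα0.le (iSup_lpNorm_nonneg q G)) (lpNorm_nonneg p η)
  have hA : 0 ≤ A := by
    have := iSup_lpNorm_nonneg q B
    have := lpNorm_nonneg p η
    positivity
  have hbound (j : ℕ) : lpNorm p (bornK α0 B G C (j + 1) fun _ => η) ≤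
      A * ρ ^ j * lpNorm p (fun _ : R × S => (1 : ℝ)) :=
    lpNorm_le_mul_of_norm_le (ENNReal.HolderConjugate.ne_zero p q) (by positivity) fun rs => by
      simpa using norm_bornK_succ_const_apply_le B G C η hα0.le p q j rs
  refine .of_nonneg_of_le (fun j => lpNorm_nonneg _ _) hbound ?_
  simpa only [mul_right_comm A] using
    ((summable_geometric_of_lt_one hρ hη).mul_left A).mul_right
      (lpNorm p fun _ : R × S => (1 : ℝ))

theorem forward_born_series_converges [Nonempty V] [Nonempty R] [Nonempty S]
    (p q : ℝ≥0∞) (hp : 1 ≤ p) (hq : 1 ≤ q) (hpq : 1 / p + 1 / q = 1)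
    (α0 : ℝ) (hα0 : 0 < α0) (B : Matrix R V ℂ) (G : Matrix V V ℂ) (C : Matrix V S ℂ)
    (η : V → ℂ) (hη : muConst α0 q G * lpNorm p η < 1) :
    Summable (fun j : ℕ => lpNorm p (bornK α0 B G C (j + 1) fun _ => η)) :=
  forward_born_series_converges_general p q hpq α0 hα0 B G C η hη
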